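/- Let A₀, A₁, h₀, h₁ be real polynomials in one variable and g₀, g₁ real polynomials in two variables. Let I ⊆ ℝ be an open interval containing 0 on which A₁(x) ≠ 0 and h₁(x) ≠ 0; set A(x) = A₀(x)/A₁(x). Define Pₗ(x,y) = A₁(x)·h₁(x)·(g₁·∂g₀/∂y − g₀·∂g₁/∂y) and Qₗ(x,y) = A₁(x)·h₀(x)·g₁² − A₀(x)·h₁(x)·g₀·g₁ − A₁(x)·h₁(x)·(g₁·∂g₀/∂x − g₀·∂g₁/∂x). Define V(x,y) = A₁(x)·h₁(x)·g₁(x,y)²·exp(−∫₀ˣ A(s) ds). Then for all x ∈ I and y ∈ ℝ, Pₗ·∂V/∂x + Qₗ·∂V/∂y = (∂Pₗ/∂x + ∂Qₗ/∂y)·V at (x,y); that is, V is an inverse integrating factor of the system ẋ = Pₗ, ẏ = Qₗ. -/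

import Mathlib

/-- Evaluation of a polynomial in two variables at `(x, y)`. -/
noncomputable def ev2 (p : MvPolynomial (Fin 2) ℝ) (x y : ℝ) : ℝ :=
  MvPolynomial.eval ![x, y] p

/-- Partial derivative with respect to the first variable. -/
noncomputable def pdX (p : MvPolynomial (Fin 2) ℝ) : MvPolynomial (Fin 2) ℝ :=
  MvPolynomial.pderiv (0 : Fin 2) p

/-- Partial derivative with respect to the second variable. -/
noncomputable def pdY (p : MvPolynomial (Fin 2) ℝ) : MvPolynomial (Fin 2) ℝ :=
  MvPolynomial.pderiv (1 : Fin 2) p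


/-- The rational function `A(x) = A₀(x)/A₁(x)`. -/
noncomputable def Afun (A₀ A₁ : Polynomial ℝ) (x : ℝ) : ℝ := A₀.eval x / A₁.eval x

/-- The rational function `h(x) = h₀(x)/h₁(x)`. -/
noncomputable def hfun (h₀ h₁ : Polynomial ℝ) (x : ℝ) : ℝ := h₀.eval x / h₁.eval x

/-- `Φ(x) = exp(−∫₀ˣ A) ∫₀ˣ exp(∫₀ˢ A) h(s) ds`. -/
noncomputable def Phi (A₀ A₁ h₀ h₁ : Polynomial ℝ) (x : ℝ) : ℝ :=
  Real.exp (-(∫ s in (0:ℝ)..x, Afun A₀ A₁ s)) *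
    ∫ s in (0:ℝ)..x, Real.exp (∫ r in (0:ℝ)..s, Afun A₀ A₁ r) * hfun h₀ h₁ s

/-- `Pₗ(x,y) = A₁ h₁ (g₁ ∂g₀/∂y − g₀ ∂g₁/∂y)`. -/
noncomputable def Pl (A₁ h₁ : Polynomial ℝ) (g₀ g₁ : MvPolynomial (Fin 2) ℝ) (x y : ℝ) : ℝ :=
  A₁.eval x * h₁.eval x * (ev2 g₁ x y * ev2 (pdY g₀) x y - ev2 g₀ x y * ev2 (pdY g₁) x y)

/-- `Qₗ(x,y) = A₁ h₀ g₁² − A₀ h₁ g₀ g₁ − A₁ h₁ (g₁ ∂g₀/∂x − g₀ ∂g₁/∂x)`. -/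
noncomputable def Ql (A₀ A₁ h₀ h₁ : Polynomial ℝ) (g₀ g₁ : MvPolynomial (Fin 2) ℝ)
    (x y : ℝ) : ℝ :=
  A₁.eval x * h₀.eval x * (ev2 g₁ x y) ^ 2
    - A₀.eval x * h₁.eval x * ev2 g₀ x y * ev2 g₁ x y
    - A₁.eval x * h₁.eval x * (ev2 g₁ x y * ev2 (pdX g₀) x y - ev2 g₀ x y * ev2 (pdX g₁) x y)

/-!
Write `u = A₁ h₁` and `E(x) = exp(−∫₀ˣ A)`, so that `E' = −A E` and `A₁ A = A₀` on `I`.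
Since mixed partial derivatives of `g₀, g₁` commute, the second derivatives cancel in
`∂Pₗ/∂x + ∂Qₗ/∂y`, and `Pₗ ∂V/∂x + Qₗ ∂V/∂y − (∂Pₗ/∂x + ∂Qₗ/∂y) V` becomes a polynomial
identity in `u, u', A₀, A₁, h₀, h₁` and the values and first partials of `g₀, g₁`.
-/

open MvPolynomial

namespace MvPolynomial

theorem pderiv_pderiv_comm {R σ : Type*} [CommSemiring R] (i j : σ) (p : MvPolynomial σ R) :
    pderiv i (pderiv j p) = pderiv j (pderiv i p) := by
  classical
  induction p using MvPolynomial.induction_on with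
  | C c => simp only [pderiv_C, map_zero]
  | add p q hp hq => simp only [map_add, hp, hq]
  | mul_X p n hp =>
    simp only [pderiv_mul, hp, pderiv_X, Pi.single_apply, map_add]
    split_ifs <;> simp [add_right_comm]

theorem hasDerivAt_eval_update {𝕜 σ : Type*} [NontriviallyNormedField 𝕜] [DecidableEq σ]
    (p : MvPolynomial σ 𝕜) (v : σ → 𝕜) (i : σ) (t : 𝕜) :
    HasDerivAt (fun s => eval (Function.update v i s) p)
      (eval (Function.update v i t) (pderiv i p)) t := by
  induction p using MvPolynomial.induction_on with
  | C c => simpa only [eval_C, pderiv_C, map_zero] using hasDerivAt_const t c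
  | add p q hp hq => simpa only [map_add] using hp.fun_add hq
  | mul_X p n hp =>
    simp only [Derivation.leibniz, pderiv_X, smul_eq_mul, map_add, map_mul, eval_X]
    by_cases h : n = i
    · subst h
      simp only [Function.update_self, Pi.single_eq_same, map_one]
      exact (hp.fun_mul (hasDerivAt_id' t)).congr_deriv (by ring)
    · simp only [Function.update_of_ne h, Pi.single_eq_of_ne h, map_zero]
      exact (hp.mul_const (v n)).congr_deriv (by ring)

end MvPolynomial

theorem hasDerivAt_ev2_fst (p : MvPolynomial (Fin 2) ℝ) (x y : ℝ) :
    HasDerivAt (fun t => ev2 p t y) (ev2 (pdX p) x y) x := by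
  have hv : ∀ t : ℝ, Function.update ![x, y] 0 t = ![t, y] := fun t => by
    ext i; fin_cases i <;> simp
  have h := hasDerivAt_eval_update p ![x, y] 0 x
  simp only [hv] at h
  exact h

theorem hasDerivAt_ev2_snd (p : MvPolynomial (Fin 2) ℝ) (x y : ℝ) :
    HasDerivAt (fun t => ev2 p x t) (ev2 (pdY p) x y) y := by
  have hv : ∀ t : ℝ, Function.update ![x, y] 1 t = ![x, t] := fun t => by
    ext i; fin_cases i <;> simp
  have h := hasDerivAt_eval_update p ![x, y] 1 y
  simp only [hv] at h
  exact h

theorem hasDerivAt_integral_of_continuousOn {E : Type*} [NormedAddCommGroup E]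
    [NormedSpace ℝ E] [CompleteSpace E] {f : ℝ → E} {I : Set ℝ} {a x : ℝ} (hI : IsOpen I)
    (hIc : I.OrdConnected) (ha : a ∈ I) (hx : x ∈ I) (hf : ContinuousOn f I) :
    HasDerivAt (fun t => ∫ s in a..t, f s) (f x) x :=
  intervalIntegral.integral_hasDerivAt_right
    ((hf.mono (hIc.uIcc_subset ha hx)).intervalIntegrable)
    (hf.stronglyMeasurableAtFilter hI x hx) (hf.continuousAt (hI.mem_nhds hx))

theorem continuousOn_Afun (A₀ A₁ : Polynomial ℝ) :
    ContinuousOn (Afun A₀ A₁) {x | A₁.eval x ≠ 0} :=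
  A₀.continuous.continuousOn.div A₁.continuous.continuousOn fun _ hx => hx

noncomputable def inverseIntegratingFactor (A₁ h₁ : Polynomial ℝ) (g₁ : MvPolynomial (Fin 2) ℝ)
    (F : ℝ → ℝ) (x y : ℝ) : ℝ :=
  A₁.eval x * h₁.eval x * ev2 g₁ x y ^ 2 * Real.exp (-F x)

section VectorField

variable (A₀ A₁ h₀ h₁ : Polynomial ℝ) (g₀ g₁ : MvPolynomial (Fin 2) ℝ)

theorem deriv_Pl_fst_add_deriv_Ql_snd (x y : ℝ) :
    deriv (fun t => Pl A₁ h₁ g₀ g₁ t y) x + deriv (fun t => Ql A₀ A₁ h₀ h₁ g₀ g₁ x t) y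
      = (A₁ * h₁).derivative.eval x
            * (ev2 g₁ x y * ev2 (pdY g₀) x y - ev2 g₀ x y * ev2 (pdY g₁) x y)
        + 2 * A₁.eval x * h₁.eval x
            * (ev2 (pdX g₁) x y * ev2 (pdY g₀) x y - ev2 (pdX g₀) x y * ev2 (pdY g₁) x y)
        + 2 * A₁.eval x * h₀.eval x * ev2 g₁ x y * ev2 (pdY g₁) x y
        - A₀.eval x * h₁.eval x
            * (ev2 (pdY g₀) x y * ev2 g₁ x y + ev2 g₀ x y * ev2 (pdY g₁) x y) := by
  have hP : HasDerivAt (fun t => Pl A₁ h₁ g₀ g₁ t y) _ x :=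
    ((A₁.hasDerivAt x).fun_mul (h₁.hasDerivAt x)).fun_mul
      (((hasDerivAt_ev2_fst g₁ x y).fun_mul (hasDerivAt_ev2_fst (pdY g₀) x y)).fun_sub
        ((hasDerivAt_ev2_fst g₀ x y).fun_mul (hasDerivAt_ev2_fst (pdY g₁) x y)))
  have hQ : HasDerivAt (fun t => Ql A₀ A₁ h₀ h₁ g₀ g₁ x t) _ y :=
    ((((hasDerivAt_ev2_snd g₁ x y).fun_pow 2).const_mul (A₁.eval x * h₀.eval x)).fun_sub
      (((hasDerivAt_ev2_snd g₀ x y).const_mul (A₀.eval x * h₁.eval x)).fun_mul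
        (hasDerivAt_ev2_snd g₁ x y))).fun_sub
      ((((hasDerivAt_ev2_snd g₁ x y).fun_mul (hasDerivAt_ev2_snd (pdX g₀) x y)).fun_sub
        ((hasDerivAt_ev2_snd g₀ x y).fun_mul (hasDerivAt_ev2_snd (pdX g₁) x y))).const_mul
        (A₁.eval x * h₁.eval x))
  rw [hP.deriv, hQ.deriv, Polynomial.derivative_mul, Polynomial.eval_add, Polynomial.eval_mul,
    Polynomial.eval_mul]
  simp only [pdX, pdY, pderiv_pderiv_comm (0 : Fin 2) 1]
  ring

theorem hasDerivAt_inverseIntegratingFactor_fst {F : ℝ → ℝ} {a x : ℝ} (hF : HasDerivAt F a x)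
    (y : ℝ) :
    HasDerivAt (fun t => inverseIntegratingFactor A₁ h₁ g₁ F t y)
      (((A₁ * h₁).derivative.eval x * ev2 g₁ x y ^ 2
          + 2 * A₁.eval x * h₁.eval x * ev2 g₁ x y * ev2 (pdX g₁) x y
          - a * A₁.eval x * h₁.eval x * ev2 g₁ x y ^ 2) * Real.exp (-F x)) x := by
  have h := (((A₁ * h₁).hasDerivAt x).fun_mul ((hasDerivAt_ev2_fst g₁ x y).fun_pow 2)).fun_mul
    hF.fun_neg.exp
  simp only [Polynomial.eval_mul] at h
  exact h.congr_deriv (by ring)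

theorem hasDerivAt_inverseIntegratingFactor_snd (F : ℝ → ℝ) (x y : ℝ) :
    HasDerivAt (fun t => inverseIntegratingFactor A₁ h₁ g₁ F x t)
      (2 * A₁.eval x * h₁.eval x * ev2 g₁ x y * ev2 (pdY g₁) x y * Real.exp (-F x)) y :=
  ((((hasDerivAt_ev2_snd g₁ x y).fun_pow 2).const_mul (A₁.eval x * h₁.eval x)).mul_const
    (Real.exp (-F x))).congr_deriv (by ring)

end VectorField

theorem stmt_9_general
    (A₀ A₁ h₀ h₁ : Polynomial ℝ) (g₀ g₁ : MvPolynomial (Fin 2) ℝ)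
    (I : Set ℝ) (hIopen : IsOpen I) (hIconn : I.OrdConnected) (h0I : (0:ℝ) ∈ I)
    (hA₁ : ∀ x ∈ I, A₁.eval x ≠ 0)
    (V : ℝ → ℝ → ℝ)
    (hV : ∀ x y, V x y = A₁.eval x * h₁.eval x * (ev2 g₁ x y) ^ 2
      * Real.exp (-(∫ s in (0:ℝ)..x, Afun A₀ A₁ s))) :
    ∀ x ∈ I, ∀ y : ℝ,
      Pl A₁ h₁ g₀ g₁ x y * deriv (fun t => V t y) x
        + Ql A₀ A₁ h₀ h₁ g₀ g₁ x y * deriv (fun t => V x t) y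
      = (deriv (fun t => Pl A₁ h₁ g₀ g₁ t y) x
          + deriv (fun t => Ql A₀ A₁ h₀ h₁ g₀ g₁ x t) y) * V x y := by
  intro x hx y
  obtain rfl : V = inverseIntegratingFactor A₁ h₁ g₁ fun x => ∫ s in (0:ℝ)..x, Afun A₀ A₁ s :=
    funext fun x => funext (hV x)
  have hF := hasDerivAt_integral_of_continuousOn hIopen hIconn h0I hx
    ((continuousOn_Afun A₀ A₁).mono hA₁)
  have hA : A₁.eval x * Afun A₀ A₁ x = A₀.eval x := mul_div_cancel₀ _ (hA₁ x hx)
  rw [(hasDerivAt_inverseIntegratingFactor_fst A₁ h₁ g₁ hF y).deriv,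
    (hasDerivAt_inverseIntegratingFactor_snd A₁ h₁ g₁ _ x y).deriv,
    deriv_Pl_fst_add_deriv_Ql_snd]
  unfold inverseIntegratingFactor Pl Ql
  linear_combination (-(A₁.eval x * h₁.eval x ^ 2 * ev2 g₁ x y ^ 2
    * (ev2 g₁ x y * ev2 (pdY g₀) x y - ev2 g₀ x y * ev2 (pdY g₁) x y)
    * Real.exp (-∫ s in (0:ℝ)..x, Afun A₀ A₁ s))) * hA

/-- Theorem 10 (inverse-integrating-factor part) of the paper:
`V(x,y) = A₁(x) h₁(x) g₁(x,y)² exp(−∫₀ˣ A)` is an inverse integrating factor of the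
system `ẋ = Pₗ, ẏ = Qₗ`. -/
theorem stmt_9
    (A₀ A₁ h₀ h₁ : Polynomial ℝ) (g₀ g₁ : MvPolynomial (Fin 2) ℝ)
    (I : Set ℝ) (hIopen : IsOpen I) (hIconn : I.OrdConnected) (h0I : (0:ℝ) ∈ I)
    (hA₁ : ∀ x ∈ I, A₁.eval x ≠ 0) (hh₁ : ∀ x ∈ I, h₁.eval x ≠ 0)
    (V : ℝ → ℝ → ℝ)
    (hV : ∀ x y, V x y = A₁.eval x * h₁.eval x * (ev2 g₁ x y) ^ 2
      * Real.exp (-(∫ s in (0:ℝ)..x, Afun A₀ A₁ s))) :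
    ∀ x ∈ I, ∀ y : ℝ,
      Pl A₁ h₁ g₀ g₁ x y * deriv (fun t => V t y) x
        + Ql A₀ A₁ h₀ h₁ g₀ g₁ x y * deriv (fun t => V x t) y
      = (deriv (fun t => Pl A₁ h₁ g₀ g₁ t y) x
          + deriv (fun t => Ql A₀ A₁ h₀ h₁ g₀ g₁ x t) y) * V x y :=
  stmt_9_general A₀ A₁ h₀ h₁ g₀ g₁ I hIopen hIconn h0I hA₁ V hV
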